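/- Let 0 = x_0 < x_1 < ... < x_n < 1 be the sorted first n elements of the van der Corput sequence in base 2 together with 0. Then for every i and every r ≥ 1 (cyclic indices), the cyclic length from x_i to x_{i+r} is at most 1 − x_{n+1−r}. -/

import Mathlib

/-!
Write `vdcCount N a b` for the number of the first `N` van der Corput points in `[a, b)`. Since
`vdc (2q) = vdc q / 2` and `vdc (2q + 1) = (1 + vdc q) / 2`, this count splits into the counts of
the first `⌈N/2⌉` and `⌊N/2⌋` points in the doubled interval, and an induction on `N` shows that
among the intervals `[a, b) ⊆ [0, 1)` of a given length the initial one `[0, b - a)` contains the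
most points and the final one `[1 - (b - a), 1)` the fewest.

As `x k` is the `k`-th point, `[0, x a)` contains exactly `a` points. Comparing `[x a, x a + x b)`
with `[0, x b)` gives `x a + x b ≤ x (a + b)`, the claim for arcs that wrap around `1`; comparing
`[x u + x v - 1, x u)` with `[x v, 1)` gives `x u + x v ≤ 1 + x (u + v - (n + 1))`, the claim for
arcs that do not.
-/

/-- The van der Corput sequence in base 2: binary radical inverse of `m`. -/
noncomputable def vdc (m : ℕ) : ℝ :=
  ∑ j ∈ Finset.range m, if m.testBit j then (1 : ℝ) / 2 ^ (j + 1) else 0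

open Finset

@[simp] lemma vdc_zero : vdc 0 = 0 := by simp [vdc]

lemma vdc_eq_sum_range {m K : ℕ} (h : m ≤ K) :
    vdc m = ∑ j ∈ range K, if m.testBit j then (1 : ℝ) / 2 ^ (j + 1) else 0 := by
  refine sum_subset (range_subset_range.2 h) fun j _ hj => ?_
  rw [Nat.testBit_eq_false_of_lt ((Nat.lt_two_pow_self).trans_le
    (Nat.pow_le_pow_right two_pos (by simpa using hj)))]
  rfl

lemma vdc_eq_half (m : ℕ) :
    vdc m = (if m.testBit 0 then 1 / 2 else 0) + vdc (m / 2) / 2 := by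
  rw [vdc_eq_sum_range (Nat.le_succ m), sum_range_succ', vdc_eq_sum_range (m.div_le_self 2),
    sum_div, add_comm]
  congr 1
  · norm_num
  · refine sum_congr rfl fun j _ => ?_
    rw [Nat.testBit_add_one]
    split_ifs <;> ring

lemma vdc_two_mul (q : ℕ) : vdc (2 * q) = vdc q / 2 := by
  rw [vdc_eq_half]; simp [Nat.testBit_zero]

lemma vdc_two_mul_add_one (q : ℕ) : vdc (2 * q + 1) = 1 / 2 + vdc q / 2 := by
  rw [vdc_eq_half, show (2 * q + 1) / 2 = q by omega]; simp [Nat.testBit_zero]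

lemma vdc_nonneg (m : ℕ) : 0 ≤ vdc m :=
  sum_nonneg fun j _ => by split_ifs <;> positivity

lemma vdc_lt_one (m : ℕ) : vdc m < 1 := by
  induction m using Nat.strong_induction_on with
  | _ m ih =>
    rcases m.eq_zero_or_pos with rfl | hm
    · simp
    · have := ih (m / 2) (Nat.div_lt_self hm one_lt_two)
      rw [vdc_eq_half]
      split_ifs <;> linarith

lemma testBit_zero_eq_of_vdc_eq {a b : ℕ} (h : vdc a = vdc b) : a.testBit 0 = b.testBit 0 := by
  rw [vdc_eq_half a, vdc_eq_half b] at h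
  have := vdc_nonneg (a / 2); have := vdc_lt_one (a / 2)
  have := vdc_nonneg (b / 2); have := vdc_lt_one (b / 2)
  cases ha : a.testBit 0 <;> cases hb : b.testBit 0 <;> simp [ha, hb] at h ⊢ <;> linarith

lemma vdc_injective : Function.Injective vdc := by
  intro a b h
  refine Nat.eq_of_testBit_eq fun j => ?_
  induction j generalizing a b with
  | zero => exact testBit_zero_eq_of_vdc_eq h
  | succ j ih =>
    rw [Nat.testBit_add_one, Nat.testBit_add_one]
    have hbit := testBit_zero_eq_of_vdc_eq h
    rw [vdc_eq_half a, vdc_eq_half b, hbit] at h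
    exact ih (by linarith)

noncomputable def vdcCount (N : ℕ) (a b : ℝ) : ℕ := #{m ∈ range N | vdc m ∈ Set.Ico a b}

lemma vdcCount_succ (N : ℕ) (a b : ℝ) :
    vdcCount (N + 1) a b = vdcCount N a b + if vdc N ∈ Set.Ico a b then 1 else 0 := by
  unfold vdcCount
  rw [range_add_one, filter_insert]
  split_ifs
  · exact card_insert_of_notMem (by simp)
  · rfl

lemma vdcCount_eq_half (N : ℕ) (a b : ℝ) :
    vdcCount N a b = vdcCount ((N + 1) / 2) (2 * a) (2 * b) +
      vdcCount (N / 2) (2 * a - 1) (2 * b - 1) := by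
  induction N with
  | zero => simp [vdcCount]
  | succ N ih =>
    rw [vdcCount_succ, ih]
    obtain ⟨q, rfl | rfl⟩ := Nat.even_or_odd' N
    · have hmem : vdc (2 * q) ∈ Set.Ico a b ↔ vdc q ∈ Set.Ico (2 * a) (2 * b) := by
        simp only [Set.mem_Ico, vdc_two_mul]
        constructor <;> rintro ⟨h₁, h₂⟩ <;> constructor <;> linarith
      rw [show (2 * q + 1 + 1) / 2 = q + 1 by omega, show (2 * q + 1) / 2 = q by omega,
        show 2 * q / 2 = q by omega, vdcCount_succ q, if_congr hmem rfl rfl]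
      ring
    · have hmem : vdc (2 * q + 1) ∈ Set.Ico a b ↔ vdc q ∈ Set.Ico (2 * a - 1) (2 * b - 1) := by
        simp only [Set.mem_Ico, vdc_two_mul_add_one]
        constructor <;> rintro ⟨h₁, h₂⟩ <;> constructor <;> linarith
      rw [show (2 * q + 1 + 1 + 1) / 2 = q + 1 by omega, show (2 * q + 1 + 1) / 2 = q + 1 by omega,
        show (2 * q + 1) / 2 = q by omega, vdcCount_succ q (2 * a - 1), if_congr hmem rfl rfl]
      ring

lemma vdcCount_mono {N : ℕ} {a a' b b' : ℝ} (ha : a' ≤ a) (hb : b ≤ b') :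
    vdcCount N a b ≤ vdcCount N a' b' :=
  card_le_card <| monotone_filter_right _ fun _ _ => (Set.Ico_subset_Ico ha hb ·)

lemma vdcCount_le_of_le {N N' : ℕ} (hN : N ≤ N') (a b : ℝ) :
    vdcCount N a b ≤ vdcCount N' a b :=
  card_le_card <| filter_subset_filter _ (range_subset_range.2 hN)

lemma vdcCount_add {N : ℕ} {a b c : ℝ} (hab : a ≤ b) (hbc : b ≤ c) :
    vdcCount N a b + vdcCount N b c = vdcCount N a c := by
  unfold vdcCount
  rw [← card_union_of_disjoint, ← filter_or]
  · simp only [← Set.mem_union, Set.Ico_union_Ico_eq_Ico hab hbc]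
  · exact disjoint_filter.2 fun m _ h₁ h₂ => h₁.2.not_ge h₂.1

lemma vdcCount_pos {N m : ℕ} {a b : ℝ} (hm : m < N) (h : vdc m ∈ Set.Ico a b) :
    0 < vdcCount N a b :=
  card_pos.2 ⟨m, mem_filter.2 ⟨mem_range.2 hm, h⟩⟩

lemma vdcCount_eq_zero {N : ℕ} {a b : ℝ} (h : ∀ m, vdc m ∉ Set.Ico a b) : vdcCount N a b = 0 :=
  card_eq_zero.2 (filter_false_of_mem fun m _ => h m)

lemma vdcCount_of_nonpos_left {N : ℕ} {a : ℝ} (b : ℝ) (ha : a ≤ 0) :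
    vdcCount N a b = vdcCount N 0 b := by
  unfold vdcCount
  congr 1
  refine filter_congr fun m _ => ?_
  simp only [Set.mem_Ico, and_congr_left_iff]
  exact fun _ => ⟨fun _ => vdc_nonneg m, fun _ => ha.trans (vdc_nonneg m)⟩

lemma vdcCount_of_one_le_right {N : ℕ} (a : ℝ) {b : ℝ} (hb : 1 ≤ b) :
    vdcCount N a b = vdcCount N a 1 := by
  unfold vdcCount
  congr 1
  refine filter_congr fun m _ => ?_
  simp only [Set.mem_Ico, and_congr_right_iff]
  exact fun _ => ⟨fun _ => vdc_lt_one m, fun _ => (vdc_lt_one m).trans_le hb⟩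

lemma vdcCount_zero_one (N : ℕ) : vdcCount N 0 1 = N := by
  unfold vdcCount
  rw [filter_true_of_mem fun m _ => ⟨vdc_nonneg m, vdc_lt_one m⟩, card_range]

lemma vdcCount_one (a b : ℝ) : vdcCount 1 a b = if 0 ∈ Set.Ico a b then 1 else 0 := by
  rw [vdcCount_succ 0]
  simp [vdcCount]

def PrefixMax (N : ℕ) : Prop :=
  ∀ a b ℓ : ℝ, 0 ≤ a → b ≤ 1 → b - a ≤ ℓ → vdcCount N a b ≤ vdcCount N 0 ℓ

def SuffixMin (N : ℕ) : Prop :=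
  ∀ a b c : ℝ, 0 ≤ a → b ≤ 1 → 1 - c ≤ b - a → vdcCount N c 1 ≤ vdcCount N a b

lemma PrefixMax.of_half {N : ℕ} (hPc : PrefixMax ((N + 1) / 2)) (hPf : PrefixMax (N / 2))
    (hSc : SuffixMin ((N + 1) / 2)) : PrefixMax N := by
  have hFC : N / 2 ≤ (N + 1) / 2 := by omega
  intro a b ℓ ha hb hℓ
  refine le_trans ?_ (vdcCount_mono le_rfl hℓ)
  rcases le_or_gt b a with hba | hab
  · rw [vdcCount_eq_zero fun m hm => by linarith [hm.1, hm.2]]; exact Nat.zero_le _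
  rw [vdcCount_eq_half N a b, vdcCount_eq_half N 0 (b - a), mul_zero, zero_sub,
    vdcCount_of_nonpos_left _ (by norm_num : (-1 : ℝ) ≤ 0)]
  rcases le_or_gt b (1 / 2) with hb2 | hb2
  · have h₀ : vdcCount (N / 2) (2 * a - 1) (2 * b - 1) = 0 :=
      vdcCount_eq_zero fun m hm => by linarith [hm.2, vdc_nonneg m]
    have := hPc (2 * a) (2 * b) (2 * (b - a)) (by linarith) (by linarith) (by linarith)
    omega
  rcases le_or_gt (1 / 2) a with ha2 | ha2
  · have h₀ : vdcCount ((N + 1) / 2) (2 * a) (2 * b) = 0 :=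
      vdcCount_eq_zero fun m hm => by linarith [hm.1, vdc_lt_one m]
    have := hPf (2 * a - 1) (2 * b - 1) (2 * (b - a)) (by linarith) (by linarith) (by linarith)
    have := vdcCount_le_of_le hFC 0 (2 * (b - a))
    omega
  rw [vdcCount_of_one_le_right (2 * a) (by linarith : 1 ≤ 2 * b),
    vdcCount_of_nonpos_left (2 * b - 1) (by linarith : 2 * a - 1 ≤ 0)]
  rcases le_or_gt (b - a) (1 / 2) with hl2 | hl2
  · have := hSc (2 * b - 1) (2 * (b - a)) (2 * a) (by linarith) (by linarith) (by linarith)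
    have := vdcCount_le_of_le hFC 0 (2 * b - 1)
    have := vdcCount_add (N := (N + 1) / 2) (by linarith : (0 : ℝ) ≤ 2 * b - 1)
      (by linarith : 2 * b - 1 ≤ 2 * (b - a))
    omega
  · have := hPf (2 * (b - a) - 1) (2 * b - 1) (2 * a) (by linarith) (by linarith) (by linarith)
    have := vdcCount_le_of_le hFC 0 (2 * a)
    have := vdcCount_add (N := N / 2) (by linarith : (0 : ℝ) ≤ 2 * (b - a) - 1)
      (by linarith : 2 * (b - a) - 1 ≤ 2 * b - 1)
    have := vdcCount_add (N := (N + 1) / 2) (by linarith : (0 : ℝ) ≤ 2 * a)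
      (by linarith : 2 * a ≤ 1)
    rw [vdcCount_of_one_le_right 0 (by linarith : 1 ≤ 2 * (b - a))]
    omega

lemma SuffixMin.of_half {N : ℕ} (hPf : PrefixMax (N / 2)) (hSc : SuffixMin ((N + 1) / 2))
    (hSf : SuffixMin (N / 2)) : SuffixMin N := by
  have hFC : N / 2 ≤ (N + 1) / 2 := by omega
  intro a b c ha hb hc
  refine le_trans (vdcCount_mono (by linarith : 1 - (b - a) ≤ c) le_rfl) ?_
  rcases le_or_gt b a with hba | hab
  · rw [vdcCount_eq_zero fun m hm => by linarith [hm.1, vdc_lt_one m]]; exact Nat.zero_le _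
  rw [vdcCount_eq_half N _ 1, vdcCount_eq_half N a b,
    vdcCount_of_one_le_right _ (by norm_num : (1 : ℝ) ≤ 2 * 1),
    show (2 : ℝ) * 1 - 1 = 1 by norm_num]
  rcases le_or_gt b (1 / 2) with hb2 | hb2
  · have h₀ : vdcCount ((N + 1) / 2) (2 * (1 - (b - a))) 1 = 0 :=
      vdcCount_eq_zero fun m hm => by linarith [hm.1, vdc_lt_one m]
    have := hSc (2 * a) (2 * b) (2 * (1 - (b - a)) - 1) (by linarith) (by linarith) (by linarith)
    have := vdcCount_le_of_le hFC (2 * (1 - (b - a)) - 1) 1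
    omega
  rcases le_or_gt (1 / 2) a with ha2 | ha2
  · have h₀ : vdcCount ((N + 1) / 2) (2 * (1 - (b - a))) 1 = 0 :=
      vdcCount_eq_zero fun m hm => by linarith [hm.1, vdc_lt_one m]
    have := hSf (2 * a - 1) (2 * b - 1) (2 * (1 - (b - a)) - 1) (by linarith) (by linarith)
      (by linarith)
    omega
  rw [vdcCount_of_one_le_right (2 * a) (by linarith : 1 ≤ 2 * b),
    vdcCount_of_nonpos_left (2 * b - 1) (by linarith : 2 * a - 1 ≤ 0)]
  rcases le_or_gt (b - a) (1 / 2) with hl2 | hl2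
  · have h₀ : vdcCount ((N + 1) / 2) (2 * (1 - (b - a))) 1 = 0 :=
      vdcCount_eq_zero fun m hm => by linarith [hm.1, vdc_lt_one m]
    have := hPf (2 * (1 - (b - a)) - 1) (2 * a) (2 * b - 1) (by linarith) (by linarith)
      (by linarith)
    have := vdcCount_le_of_le hFC (2 * a) 1
    have := vdcCount_add (N := N / 2) (by linarith : 2 * (1 - (b - a)) - 1 ≤ 2 * a)
      (by linarith : 2 * a ≤ 1)
    omega
  · have := hSc (2 * a) (2 * (1 - (b - a))) (2 * b - 1) (by linarith) (by linarith) (by linarith)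
    have := vdcCount_le_of_le hFC (2 * b - 1) 1
    have := vdcCount_add (N := N / 2) (by linarith : (0 : ℝ) ≤ 2 * b - 1)
      (by linarith : 2 * b - 1 ≤ 1)
    have := vdcCount_add (N := (N + 1) / 2) (by linarith : 2 * a ≤ 2 * (1 - (b - a)))
      (by linarith : 2 * (1 - (b - a)) ≤ 1)
    rw [vdcCount_of_nonpos_left 1 (by linarith : 2 * (1 - (b - a)) - 1 ≤ 0)]
    omega

lemma prefixMax_and_suffixMin (N : ℕ) : PrefixMax N ∧ SuffixMin N := by
  induction N using Nat.strong_induction_on with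
  | _ N ih =>
    rcases lt_or_ge N 2 with hN | hN
    · interval_cases N
      · simp [PrefixMax, SuffixMin, vdcCount]
      · refine ⟨fun a b ℓ ha hb hℓ => ?_, fun a b c ha hb hc => ?_⟩ <;>
          simp only [vdcCount_one, Set.mem_Ico] <;> split_ifs <;> grind
    · obtain ⟨hPc, hSc⟩ := ih ((N + 1) / 2) (by omega)
      obtain ⟨hPf, hSf⟩ := ih (N / 2) (by omega)
      exact ⟨.of_half hPc hPf hSc, .of_half hPf hSc hSf⟩

section SortedPoints

variable {n : ℕ} {x : ℕ → ℝ}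

lemma exists_vdc_eq (himg : (range (n + 1)).image x = (range (n + 1)).image vdc) {i : ℕ}
    (hi : i ≤ n) : ∃ m ≤ n, vdc m = x i := by
  obtain ⟨m, hm, hxm⟩ :=
    mem_image.1 (himg ▸ mem_image_of_mem x (mem_range.2 (Nat.lt_succ_of_le hi)))
  exact ⟨m, Nat.le_of_lt_succ (mem_range.1 hm), hxm⟩

lemma card_filter_mem_Ico (hmono : StrictMonoOn x (Set.Iic n))
    (himg : (range (n + 1)).image x = (range (n + 1)).image vdc) (u v : ℝ) :
    #{i ∈ range (n + 1) | x i ∈ Set.Ico u v} = vdcCount (n + 1) u v := by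
  have hinj : Set.InjOn x (range (n + 1)) :=
    hmono.injOn.mono fun i hi => Nat.le_of_lt_succ (mem_range.1 hi)
  have hx := card_image_of_injOn (s := {i ∈ range (n + 1) | x i ∈ Set.Ico u v})
    (hinj.mono (filter_subset _ _))
  have hvdc := card_image_of_injective {m ∈ range (n + 1) | vdc m ∈ Set.Ico u v} vdc_injective
  rw [← filter_image (p := (· ∈ Set.Ico u v))] at hx hvdc
  rw [vdcCount, ← hx, ← hvdc, himg]

lemma vdcCount_zero_apply (hmono : StrictMonoOn x (Set.Iic n))
    (himg : (range (n + 1)).image x = (range (n + 1)).image vdc) {a : ℕ} (ha : a ≤ n) :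
    vdcCount (n + 1) 0 (x a) = a := by
  rw [← card_filter_mem_Ico hmono himg]
  refine (congrArg card ?_).trans (card_range a)
  ext i
  simp only [mem_filter, mem_range, Set.mem_Ico]
  constructor
  · rintro ⟨hi, -, hia⟩
    exact (hmono.lt_iff_lt (Set.mem_Iic.2 (by omega)) (Set.mem_Iic.2 ha)).1 hia
  · intro hia
    obtain ⟨m, -, hm⟩ := exists_vdc_eq himg (i := i) (by omega)
    exact ⟨by omega, hm ▸ vdc_nonneg m, hmono (Set.mem_Iic.2 (by omega)) (Set.mem_Iic.2 ha) hia⟩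

lemma vdcCount_apply_one (hmono : StrictMonoOn x (Set.Iic n))
    (himg : (range (n + 1)).image x = (range (n + 1)).image vdc) {a : ℕ} (ha : a ≤ n) :
    vdcCount (n + 1) (x a) 1 = n + 1 - a := by
  obtain ⟨m, -, hm⟩ := exists_vdc_eq himg ha
  have := vdcCount_add (N := n + 1) (hm ▸ vdc_nonneg m) (hm ▸ (vdc_lt_one m).le)
  rw [vdcCount_zero_one, vdcCount_zero_apply hmono himg ha] at this
  omega

lemma le_apply_of_vdcCount_le (hmono : StrictMonoOn x (Set.Iic n))
    (himg : (range (n + 1)).image x = (range (n + 1)).image vdc) {t : ℝ} {k : ℕ} (hk : k ≤ n)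
    (h : vdcCount (n + 1) 0 t ≤ k) : t ≤ x k := by
  by_contra! hlt
  obtain ⟨m, hmn, hm⟩ := exists_vdc_eq himg hk
  have hpos : 0 < vdcCount (n + 1) (x k) t :=
    vdcCount_pos (by omega : m < n + 1) (by rw [hm]; exact ⟨le_rfl, hlt⟩)
  have := vdcCount_add (N := n + 1) (hm ▸ vdc_nonneg m) hlt.le
  rw [vdcCount_zero_apply hmono himg hk] at this
  omega

lemma le_apply_of_le_vdcCount (hmono : StrictMonoOn x (Set.Iic n))
    (himg : (range (n + 1)).image x = (range (n + 1)).image vdc) {t : ℝ} {k : ℕ} (hk : k ≤ n)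
    (h : n + 1 - k ≤ vdcCount (n + 1) t 1) : t ≤ x k := by
  by_contra! hlt
  obtain ⟨m, hmn, hm⟩ := exists_vdc_eq himg hk
  rcases le_or_gt t 1 with ht | ht
  · have hpos : 0 < vdcCount (n + 1) (x k) t :=
      vdcCount_pos (by omega : m < n + 1) (by rw [hm]; exact ⟨le_rfl, hlt⟩)
    have := vdcCount_add (N := n + 1) hlt.le ht
    rw [vdcCount_apply_one hmono himg hk] at this
    omega
  · rw [vdcCount_eq_zero fun m hm => by linarith [hm.1, hm.2]] at h
    omega

lemma apply_add_apply_le (hmono : StrictMonoOn x (Set.Iic n))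
    (himg : (range (n + 1)).image x = (range (n + 1)).image vdc) {a b : ℕ} (hab : a + b ≤ n) :
    x a + x b ≤ x (a + b) := by
  obtain ⟨ma, -, hma⟩ := exists_vdc_eq himg (i := a) (by omega)
  obtain ⟨mb, -, hmb⟩ := exists_vdc_eq himg (i := b) (by omega)
  have hxa := hma ▸ vdc_nonneg ma
  have hxb := hmb ▸ vdc_nonneg mb
  have hsum : x a + x b ≤ 1 := by
    by_contra! hgt
    have := (prefixMax_and_suffixMin (n + 1)).1 (x a) 1 (x b) hxa le_rfl (by linarith)
    rw [vdcCount_apply_one hmono himg (by omega), vdcCount_zero_apply hmono himg (by omega)] at this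
    omega
  refine le_apply_of_vdcCount_le hmono himg hab ?_
  have := (prefixMax_and_suffixMin (n + 1)).1 (x a) (x a + x b) (x b) hxa hsum (by linarith)
  rw [vdcCount_zero_apply hmono himg (by omega)] at this
  rw [← vdcCount_add hxa (by linarith), vdcCount_zero_apply hmono himg (by omega)]
  omega

lemma apply_add_apply_le_one_add (hmono : StrictMonoOn x (Set.Iic n))
    (himg : (range (n + 1)).image x = (range (n + 1)).image vdc) {u v : ℕ} (hu : u ≤ n)
    (hv : v ≤ n) (huv : n + 1 ≤ u + v) : x u + x v ≤ 1 + x (u + v - (n + 1)) := by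
  obtain ⟨mu, -, hmu⟩ := exists_vdc_eq himg hu
  obtain ⟨mv, -, hmv⟩ := exists_vdc_eq himg hv
  obtain ⟨mw, -, hmw⟩ := exists_vdc_eq himg (i := u + v - (n + 1)) (by omega)
  rcases le_or_gt (x u + x v - 1) 0 with ht | ht
  · linarith [hmw ▸ vdc_nonneg mw]
  suffices x u + x v - 1 ≤ x (u + v - (n + 1)) by linarith
  refine le_apply_of_le_vdcCount hmono himg (by omega) ?_
  have := (prefixMax_and_suffixMin (n + 1)).2 (x u + x v - 1) (x u) (x v) ht.le
    (hmu ▸ (vdc_lt_one mu).le) (by linarith)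
  rw [vdcCount_apply_one hmono himg hv] at this
  rw [← vdcCount_add (by linarith [hmv ▸ vdc_lt_one mv]) (hmu ▸ (vdc_lt_one mu).le),
    vdcCount_apply_one hmono himg hu]
  omega

end SortedPoints

lemma image_range_eq_image_vdc {n : ℕ} {x : ℕ → ℝ}
    (himg : ∀ y : ℝ, (∃ i, i ≤ n ∧ x i = y) ↔ (y = 0 ∨ ∃ m, 1 ≤ m ∧ m ≤ n ∧ vdc m = y)) :
    (range (n + 1)).image x = (range (n + 1)).image vdc := by
  ext y
  simp only [mem_image, mem_range, Nat.lt_succ_iff, himg]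
  constructor
  · rintro (rfl | ⟨m, -, hm, rfl⟩)
    exacts [⟨0, Nat.zero_le n, vdc_zero⟩, ⟨m, hm, rfl⟩]
  · rintro ⟨m, hm, rfl⟩
    rcases m.eq_zero_or_pos with rfl | hpos
    exacts [Or.inl vdc_zero, Or.inr ⟨m, hpos, hm, rfl⟩]

theorem stmt_11_general (n : ℕ) (x : ℕ → ℝ)
    (hmono : ∀ i j, i < j → j ≤ n → x i < x j)
    (himg : ∀ y : ℝ, (∃ i, i ≤ n ∧ x i = y) ↔
      (y = 0 ∨ ∃ m, 1 ≤ m ∧ m ≤ n ∧ vdc m = y)) :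
    ∀ i ≤ n, ∀ r, 1 ≤ r → r ≤ n →
      (if i + r ≤ n then x (i + r) - x i
       else (1 - x i) + x ((i + r) % (n + 1))) ≤ 1 - x (n + 1 - r) := by
  have hmono' : StrictMonoOn x (Set.Iic n) := fun i _ j hj hij => hmono i j hij hj
  have himg' := image_range_eq_image_vdc himg
  intro i hi r hr1 hr2
  split_ifs with hir
  · have := apply_add_apply_le_one_add hmono' himg' hir (by omega : n + 1 - r ≤ n) (by omega)
    rw [show i + r + (n + 1 - r) - (n + 1) = i by omega] at this
    linarith
  · have := apply_add_apply_le hmono' himg' (a := i + r - (n + 1)) (b := n + 1 - r) (by omega)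
    rw [show i + r - (n + 1) + (n + 1 - r) = i by omega] at this
    rw [Nat.mod_eq_sub_mod (by omega), Nat.mod_eq_of_lt (by omega)]
    linarith

theorem stmt_11 (n : ℕ) (x : ℕ → ℝ)
    (hx0 : x 0 = 0)
    (hmono : ∀ i j, i < j → j ≤ n → x i < x j)
    (hlt1 : x n < 1)
    (himg : ∀ y : ℝ, (∃ i, i ≤ n ∧ x i = y) ↔
      (y = 0 ∨ ∃ m, 1 ≤ m ∧ m ≤ n ∧ vdc m = y)) :
    ∀ i ≤ n, ∀ r, 1 ≤ r → r ≤ n →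
      (if i + r ≤ n then x (i + r) - x i
       else (1 - x i) + x ((i + r) % (n + 1))) ≤ 1 - x (n + 1 - r) :=
  stmt_11_general n x hmono himg
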